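/- arXiv:2104.03066 — 5 statements merged into one kernel-verified Lean document; each statement's English description precedes it below -/
import Mathlib

section
/- Let X be a metric space, I a nonempty finite index type, z : I → X a finite family of points, i ∈ I, and let μ, μ̂ ∈ X and ε ≥ 0 satisfy dist(μ̂, μ) ≤ ε. Then exp(−dist(μ, z i)) / Σ_{j∈I} exp(−dist(μ, z j)) ≥ exp(−dist(μ̂, z i) − ε) / Σ_{j∈I} exp(−dist(μ̂, z j) + ε). -/
open scoped BigOperators

/-- **Likelihood ratio bound (Eq. 16, corrected form).**
For any centroid `μ` within distance `ε` of the empirical centroid `μhat`,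
the normalized likelihood at `μ` is lower bounded by the ε-penalized
normalized likelihood computed at `μhat`. -/
theorem normalized_likelihood_ge_penalized {X : Type*} [MetricSpace X]
    {I : Type*} [Fintype I] [Nonempty I] (z : I → X) (i : I)
    (μ μhat : X) (ε : ℝ) (hε : 0 ≤ ε) (h : dist μhat μ ≤ ε) :
    Real.exp (-dist μ (z i)) / (∑ j, Real.exp (-dist μ (z j))) ≥
      Real.exp (-dist μhat (z i) - ε) /
        (∑ j, Real.exp (-dist μhat (z j) + ε)) := by
  have hnum : Real.exp (-dist μhat (z i) - ε) ≤ Real.exp (-dist μ (z i)) := by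
    apply Real.exp_le_exp.mpr
    have := dist_triangle μ μhat (z i)
    rw [dist_comm μ μhat] at this
    linarith
  have hden : (∑ j, Real.exp (-dist μ (z j))) ≤ ∑ j, Real.exp (-dist μhat (z j) + ε) := by
    apply Finset.sum_le_sum
    intro j _
    apply Real.exp_le_exp.mpr
    have := dist_triangle μhat μ (z j)
    linarith
  have hpos : 0 < ∑ j, Real.exp (-dist μ (z j)) :=
    Finset.sum_pos (fun j _ => Real.exp_pos _) Finset.univ_nonempty
  have hpos' : 0 < ∑ j, Real.exp (-dist μhat (z j) + ε) :=
    Finset.sum_pos (fun j _ => Real.exp_pos _) Finset.univ_nonempty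
  exact div_le_div₀ (Real.exp_pos _).le hnum hpos hden
end

section
/- Let X be a metric space, I a nonempty finite index type, z : I → X a finite family of points, i ∈ I, and ε ≥ 0. For every μ with dist(μ̂, μ) ≤ ε, the negative log-likelihood satisfies NLL(i, μ) ≥ NLL(i, μ̂) − 2ε, where NLL(i, ν) = −log(exp(−dist(ν, z i)) / Σ_{j∈I} exp(−dist(ν, z j))). -/
open scoped BigOperators

/-- **Robust lower bound on the negative log-likelihood (Appendix B, corrected form).**
Whenever the true centroid `μ` lies within the ε-uncertainty ball around the
empirical centroid `μhat`, the negative log-likelihood at `μ` is bounded below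
by `NLL(i, μhat) - 2ε`. -/
theorem nll_ge_robust_lower {X : Type*} [MetricSpace X]
    {I : Type*} [Fintype I] [Nonempty I] (z : I → X) (i : I)
    (μhat : X) (ε : ℝ) (hε : 0 ≤ ε) :
    ∀ μ : X, dist μhat μ ≤ ε →
      -Real.log (Real.exp (-dist μ (z i)) / ∑ j, Real.exp (-dist μ (z j))) ≥
        -Real.log (Real.exp (-dist μhat (z i)) /
            ∑ j, Real.exp (-dist μhat (z j))) - 2 * ε := by
  intro μ hμ
  have hSpos : ∀ ν : X, 0 < ∑ j, Real.exp (-dist ν (z j)) := fun ν =>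
    Finset.sum_pos (fun j _ => Real.exp_pos _) Finset.univ_nonempty
  have h1 : dist μhat (z i) - ε ≤ dist μ (z i) := by
    have := dist_triangle μhat μ (z i); linarith
  have h2 : Real.exp (-ε) * ∑ j, Real.exp (-dist μhat (z j)) ≤
      ∑ j, Real.exp (-dist μ (z j)) := by
    rw [Finset.mul_sum]
    refine Finset.sum_le_sum fun j _ => ?_
    rw [← Real.exp_add]
    apply Real.exp_le_exp.mpr
    have := dist_triangle μ μhat (z j)
    rw [dist_comm μ μhat] at this
    linarith
  have h3 : Real.log (∑ j, Real.exp (-dist μhat (z j))) - ε ≤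
      Real.log (∑ j, Real.exp (-dist μ (z j))) := by
    have h := Real.log_le_log (by positivity) h2
    rw [Real.log_mul (Real.exp_ne_zero _) (hSpos μhat).ne', Real.log_exp] at h; linarith
  rw [ge_iff_le, Real.log_div (Real.exp_ne_zero _) (hSpos μ).ne',
      Real.log_div (Real.exp_ne_zero _) (hSpos μhat).ne', Real.log_exp, Real.log_exp]
  linarith
end

section
/- Let X be a metric space, I a nonempty finite index type, z : I → X a finite family of points, and i ∈ I. Then for all μ, μ̂ ∈ X, |NLL(i, μ) − NLL(i, μ̂)| ≤ 2·dist(μ, μ̂), where NLL(i, ν) = −log(exp(−dist(ν, z i)) / Σ_{j∈I} exp(−dist(ν, z j))); that is, the per-sample negative log-likelihood is 2-Lipschitz as a function of the centroid. -/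
open scoped BigOperators

lemma sum_exp_pos_aux {X : Type*} [MetricSpace X] {I : Type*} [Fintype I] [Nonempty I]
    (z : I → X) (ν : X) : 0 < ∑ j, Real.exp (-dist ν (z j)) :=
  Finset.sum_pos (fun j _ => Real.exp_pos _) Finset.univ_nonempty

lemma log_sum_exp_sub_le {X : Type*} [MetricSpace X] {I : Type*} [Fintype I] [Nonempty I]
    (z : I → X) (μ μhat : X) :
    Real.log (∑ j, Real.exp (-dist μ (z j))) -
      Real.log (∑ j, Real.exp (-dist μhat (z j))) ≤ dist μ μhat := by
  have h1 := sum_exp_pos_aux z μ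
  have h2 := sum_exp_pos_aux z μhat
  have hle : (∑ j, Real.exp (-dist μ (z j))) ≤
      Real.exp (dist μ μhat) * ∑ j, Real.exp (-dist μhat (z j)) := by
    rw [Finset.mul_sum]
    refine Finset.sum_le_sum fun j _ => ?_
    rw [← Real.exp_add]
    apply Real.exp_le_exp.2
    have := dist_triangle μhat μ (z j)
    rw [dist_comm μhat μ] at this
    linarith
  calc Real.log (∑ j, Real.exp (-dist μ (z j))) -
        Real.log (∑ j, Real.exp (-dist μhat (z j)))
      ≤ Real.log (Real.exp (dist μ μhat) * ∑ j, Real.exp (-dist μhat (z j))) -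
        Real.log (∑ j, Real.exp (-dist μhat (z j))) := by
        gcongr
    _ = dist μ μhat := by
        rw [Real.log_mul (Real.exp_pos _).ne' h2.ne', Real.log_exp]; ring

/-- **The per-sample negative log-likelihood is 2-Lipschitz in the centroid.**
For any two centroids `μ`, `μhat`, the difference of the negative
log-likelihoods is at most `2 * dist μ μhat`. -/
theorem abs_nll_sub_nll_le_two_dist {X : Type*} [MetricSpace X]
    {I : Type*} [Fintype I] [Nonempty I] (z : I → X) (i : I) (μ μhat : X) :
    |(-Real.log (Real.exp (-dist μ (z i)) / ∑ j, Real.exp (-dist μ (z j)))) -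
        (-Real.log (Real.exp (-dist μhat (z i)) /
            ∑ j, Real.exp (-dist μhat (z j))))| ≤ 2 * dist μ μhat := by
  have h1 := sum_exp_pos_aux z μ
  have h2 := sum_exp_pos_aux z μhat
  rw [Real.log_div (Real.exp_pos _).ne' h1.ne',
      Real.log_div (Real.exp_pos _).ne' h2.ne', Real.log_exp, Real.log_exp]
  have hd1 : |dist μ (z i) - dist μhat (z i)| ≤ dist μ μhat :=
    abs_dist_sub_le _ _ _
  have hl1 := log_sum_exp_sub_le z μ μhat
  have hl2 := log_sum_exp_sub_le z μhat μ
  rw [dist_comm μhat μ] at hl2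
  rw [abs_le] at hd1 ⊢
  constructor <;> [skip; skip] <;>
    · have := hd1.1; have := hd1.2; linarith
end

section
/- Let X be a metric space, I a nonempty finite index type, z : I → X a finite family of points, and S a nonempty finite subset of I (the indices of samples of one class). Let μ, μ̂ ∈ X and ε ≥ 0 satisfy dist(μ̂, μ) ≤ ε. Then the per-class negative log-likelihood satisfies −Σ_{i∈S} log P(i|μ) ≤ −Σ_{i∈S} log P(i|μ̂) + 2·ε·|S|, where P(i|ν) = exp(−dist(ν, z i)) / Σ_{j∈I} exp(−dist(ν, z j)) and |S| is the cardinality of S. -/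
open scoped BigOperators

/-- **Per-class robust bound (set-level Theorem 1, corrected form).**
For a nonempty finite set `S` of sample indices of one class, if the true
centroid `μ` is within distance `ε` of the empirical centroid `μhat`, then
the per-class negative log-likelihood at `μ` is bounded by the surrogate at
`μhat` plus `2 * ε * |S|`. -/
theorem class_nll_le_robust_surrogate {X : Type*} [MetricSpace X]
    {I : Type*} [Fintype I] [Nonempty I] (z : I → X)
    (S : Finset I) (hS : S.Nonempty)
    (μ μhat : X) (ε : ℝ) (hε : 0 ≤ ε) (h : dist μhat μ ≤ ε) :
    -∑ i ∈ S, Real.log (Real.exp (-dist μ (z i)) /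
        ∑ j, Real.exp (-dist μ (z j))) ≤
      -∑ i ∈ S, Real.log (Real.exp (-dist μhat (z i)) /
          ∑ j, Real.exp (-dist μhat (z j))) + 2 * ε * (S.card : ℝ) := by
  have hspos : ∀ ν : X, 0 < ∑ j, Real.exp (-dist ν (z j)) := fun ν =>
    Finset.sum_pos (fun j _ => Real.exp_pos _) Finset.univ_nonempty
  have hlog : ∀ ν : X, ∀ i : I,
      Real.log (Real.exp (-dist ν (z i)) / ∑ j, Real.exp (-dist ν (z j)))
        = -dist ν (z i) - Real.log (∑ j, Real.exp (-dist ν (z j))) := by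
    intro ν i
    rw [Real.log_div (Real.exp_ne_zero _) (ne_of_gt (hspos ν)), Real.log_exp]
  have hsum : ∑ j, Real.exp (-dist μ (z j)) ≤
      Real.exp ε * ∑ j, Real.exp (-dist μhat (z j)) := by
    rw [Finset.mul_sum]
    refine Finset.sum_le_sum fun j _ => ?_
    rw [← Real.exp_add]
    apply Real.exp_le_exp.2
    have := dist_triangle μhat μ (z j)
    linarith
  have hlogle : Real.log (∑ j, Real.exp (-dist μ (z j))) ≤
      ε + Real.log (∑ j, Real.exp (-dist μhat (z j))) := by
    calc Real.log (∑ j, Real.exp (-dist μ (z j)))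
        ≤ Real.log (Real.exp ε * ∑ j, Real.exp (-dist μhat (z j))) :=
          Real.log_le_log (hspos μ) hsum
      _ = ε + Real.log (∑ j, Real.exp (-dist μhat (z j))) := by
          rw [Real.log_mul (Real.exp_ne_zero _) (ne_of_gt (hspos μhat)), Real.log_exp]
  have key : ∀ i ∈ S,
      -(Real.log (Real.exp (-dist μ (z i)) / ∑ j, Real.exp (-dist μ (z j)))) ≤
      -(Real.log (Real.exp (-dist μhat (z i)) / ∑ j, Real.exp (-dist μhat (z j)))) + 2 * ε := by
    intro i _
    rw [hlog μ i, hlog μhat i]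
    have := dist_triangle μ μhat (z i)
    rw [dist_comm μ μhat] at this
    linarith
  calc -∑ i ∈ S, Real.log (Real.exp (-dist μ (z i)) / ∑ j, Real.exp (-dist μ (z j)))
      = ∑ i ∈ S, -(Real.log (Real.exp (-dist μ (z i)) / ∑ j, Real.exp (-dist μ (z j)))) := by
        rw [Finset.sum_neg_distrib]
    _ ≤ ∑ i ∈ S, (-(Real.log (Real.exp (-dist μhat (z i)) / ∑ j, Real.exp (-dist μhat (z j)))) + 2 * ε) :=
        Finset.sum_le_sum key
    _ = -∑ i ∈ S, Real.log (Real.exp (-dist μhat (z i)) / ∑ j, Real.exp (-dist μhat (z j))) + 2 * ε * S.card := by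
        rw [Finset.sum_add_distrib, Finset.sum_neg_distrib, Finset.sum_const, nsmul_eq_mul]
        ring
end

section
/- Let X be a metric space, I a nonempty finite index type, z : I → X a finite family of points, C a finite type of class labels, and y : I → C a labeling such that for every class c the set S_c = {i ∈ I : y i = c} is nonempty. Suppose for each class c we are given points μ_c, μ̂_c ∈ X and ε_c ≥ 0 with dist(μ̂_c, μ_c) ≤ ε_c. Then the class-balanced negative log-likelihood loss satisfies Σ_{c∈C} (1/|S_c|) Σ_{i∈S_c} NLL(i, μ_c) ≤ Σ_{c∈C} (1/|S_c|) Σ_{i∈S_c} NLL(i, μ̂_c) + 2·Σ_{c∈C} ε_c, where NLL(i, ν) = −log(exp(−dist(ν, z i)) / Σ_{j∈I} exp(−dist(ν, z j))). -/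
open scoped BigOperators

lemma nll_pointwise {X : Type*} [MetricSpace X] {I : Type*} [Fintype I] [Nonempty I]
    (z : I → X) (ν ν' : X) (ε : ℝ) (hd : dist ν' ν ≤ ε) (i : I) :
    -Real.log (Real.exp (-dist ν (z i)) / ∑ j, Real.exp (-dist ν (z j))) ≤
      -Real.log (Real.exp (-dist ν' (z i)) / ∑ j, Real.exp (-dist ν' (z j))) + 2 * ε := by
  have hS : ∀ w : X, (0:ℝ) < ∑ j, Real.exp (-dist w (z j)) :=
    fun w => Finset.sum_pos (fun j _ => Real.exp_pos _) Finset.univ_nonempty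
  have key : ∀ w : X, -Real.log (Real.exp (-dist w (z i)) / ∑ j, Real.exp (-dist w (z j)))
      = dist w (z i) + Real.log (∑ j, Real.exp (-dist w (z j))) := by
    intro w
    rw [Real.log_div (Real.exp_ne_zero _) (ne_of_gt (hS w)), Real.log_exp]
    ring
  rw [key, key]
  have h1 : dist ν (z i) ≤ dist ν' (z i) + ε := by
    calc dist ν (z i) ≤ dist ν ν' + dist ν' (z i) := dist_triangle _ _ _
      _ ≤ dist ν' (z i) + ε := by rw [dist_comm]; linarith
  have h2 : Real.log (∑ j, Real.exp (-dist ν (z j)))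
      ≤ Real.log (∑ j, Real.exp (-dist ν' (z j))) + ε := by
    have hle : (∑ j, Real.exp (-dist ν (z j)))
        ≤ Real.exp ε * ∑ j, Real.exp (-dist ν' (z j)) := by
      rw [Finset.mul_sum]
      refine Finset.sum_le_sum fun j _ => ?_
      rw [← Real.exp_add]
      apply Real.exp_le_exp.2
      have := dist_triangle ν' ν (z j)
      linarith
    calc Real.log (∑ j, Real.exp (-dist ν (z j)))
        ≤ Real.log (Real.exp ε * ∑ j, Real.exp (-dist ν' (z j))) :=
          Real.log_le_log (hS ν) hle
      _ = Real.log (∑ j, Real.exp (-dist ν' (z j))) + ε := by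
          rw [Real.log_mul (Real.exp_ne_zero _) (ne_of_gt (hS ν')), Real.log_exp]; ring
  linarith

/-- **Robust bound for the class-balanced loss (full-loss Theorem 1, corrected form).**
With per-class weights `1/|S_c|` and per-class uncertainty radii `ε c`
(with `dist (μhat c) (μ c) ≤ ε c`), the class-balanced negative
log-likelihood loss at the true centroids is bounded by the surrogate at the
empirical centroids plus `2 * ∑ c, ε c`. -/
theorem balanced_nll_le_robust_surrogate {X : Type*} [MetricSpace X]
    {I : Type*} [Fintype I] [Nonempty I] (z : I → X)
    {C : Type*} [Fintype C] [DecidableEq C] (y : I → C)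
    (hS : ∀ c : C, (Finset.univ.filter (fun i => y i = c)).Nonempty)
    (μ μhat : C → X) (ε : C → ℝ) (hε : ∀ c, 0 ≤ ε c)
    (h : ∀ c, dist (μhat c) (μ c) ≤ ε c) :
    ∑ c : C, (1 / ((Finset.univ.filter (fun i => y i = c)).card : ℝ)) *
        ∑ i ∈ Finset.univ.filter (fun i => y i = c),
          -Real.log (Real.exp (-dist (μ c) (z i)) /
              ∑ j, Real.exp (-dist (μ c) (z j))) ≤
      ∑ c : C, (1 / ((Finset.univ.filter (fun i => y i = c)).card : ℝ)) *
          ∑ i ∈ Finset.univ.filter (fun i => y i = c),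
            -Real.log (Real.exp (-dist (μhat c) (z i)) /
                ∑ j, Real.exp (-dist (μhat c) (z j))) +
        2 * ∑ c : C, ε c := by
  rw [Finset.mul_sum, ← Finset.sum_add_distrib]
  refine Finset.sum_le_sum fun c _ => ?_
  set S := Finset.univ.filter (fun i => y i = c)
  have hcard : (0:ℝ) < (S.card : ℝ) := by
    exact_mod_cast Finset.card_pos.2 (hS c)
  have hpt : ∀ i ∈ S,
      -Real.log (Real.exp (-dist (μ c) (z i)) / ∑ j, Real.exp (-dist (μ c) (z j))) ≤
        -Real.log (Real.exp (-dist (μhat c) (z i)) /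
          ∑ j, Real.exp (-dist (μhat c) (z j))) + 2 * ε c :=
    fun i _ => nll_pointwise z (μ c) (μhat c) (ε c) (h c) i
  have hsum := Finset.sum_le_sum hpt
  rw [Finset.sum_add_distrib, Finset.sum_const, nsmul_eq_mul] at hsum
  have := mul_le_mul_of_nonneg_left hsum (le_of_lt (one_div_pos.2 hcard))
  calc (1 / (S.card : ℝ)) * ∑ i ∈ S,
        -Real.log (Real.exp (-dist (μ c) (z i)) / ∑ j, Real.exp (-dist (μ c) (z j)))
      ≤ (1 / (S.card : ℝ)) * ((∑ i ∈ S,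
          -Real.log (Real.exp (-dist (μhat c) (z i)) /
            ∑ j, Real.exp (-dist (μhat c) (z j)))) + (S.card : ℝ) * (2 * ε c)) := this
    _ = (1 / (S.card : ℝ)) * (∑ i ∈ S,
          -Real.log (Real.exp (-dist (μhat c) (z i)) /
            ∑ j, Real.exp (-dist (μhat c) (z j)))) + 2 * ε c := by
          field_simp
end
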